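/- arXiv:2504.15325 — 2 statements merged into one kernel-verified Lean document; each statement's English description precedes it below -/
import Mathlib

section
/- Let σ be an agreement measure on n×n real matrices with σ(M) = σ((1/Σ M)·M) for all nonzero natural matrices M, and suppose the set S = {x in the probability simplex Δ^{(n²-1)} : σ(γ(x)) < c} is Riemann (Jordan) measurable after projection. Then the fraction of n×n natural matrices with entry sum m satisfying σ(M) < c converges, as m → ∞, to the ratio of the Jordan measure of π(S) to the Jordan measure of π(Δ^{(n²-1)}). -/
open Filter MeasureTheory

/-- `γ` reshapes a vector of `ℝ^{n²}` into an `n × n` real matrix, row by row. -/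
def gammaMapR (n : ℕ) (x : Fin (n ^ 2) → ℝ) : Matrix (Fin n) (Fin n) ℝ :=
  fun i j => x ⟨i.1 * n + j.1, by
    have hi := i.2; have hj := j.2
    have h : i.1 * n + j.1 < n * n := by nlinarith
    simpa [pow_two] using h⟩

/-- `π` drops the last coordinate. -/
def projMap (n : ℕ) (x : Fin (n ^ 2) → ℝ) : Fin (n ^ 2 - 1) → ℝ :=
  fun i => x ⟨i.1, lt_of_lt_of_le i.2 (Nat.sub_le _ 1)⟩

namespace SigAux

variable {d : ℕ}

def latt (s : Set (Fin d → ℝ)) (m : ℕ) : Set (Fin d → ℤ) :=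
  {k | (fun i => (k i : ℝ) / m) ∈ s}

def cube (m : ℕ) (k : Fin d → ℤ) : Set (Fin d → ℝ) :=
  Set.univ.pi fun i => {t : ℝ | ⌊(m : ℝ) * t⌋ = k i}

lemma floor_set_eq {m : ℕ} (hm : m ≠ 0) (k : ℤ) :
    {t : ℝ | ⌊(m : ℝ) * t⌋ = k} = Set.Ico ((k : ℝ) / m) (((k : ℝ) + 1) / m) := by
  have hm' : (0 : ℝ) < m := by positivity
  ext t
  simp only [Set.mem_setOf_eq, Set.mem_Ico, div_le_iff₀ hm', lt_div_iff₀ hm', Int.floor_eq_iff]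
  constructor
  · rintro ⟨h1, h2⟩; constructor <;> nlinarith
  · rintro ⟨h1, h2⟩; constructor <;> nlinarith

lemma measurableSet_cube {m : ℕ} (hm : m ≠ 0) (k : Fin d → ℤ) :
    MeasurableSet (cube m k) := by
  apply MeasurableSet.univ_pi
  intro i
  rw [floor_set_eq hm]
  exact measurableSet_Ico

lemma volume_cube {m : ℕ} (hm : m ≠ 0) (k : Fin d → ℤ) :
    volume (cube m k) = (ENNReal.ofReal (1 / m)) ^ d := by
  rw [cube, volume_pi_pi]
  have : ∀ i : Fin d, volume {t : ℝ | ⌊(m : ℝ) * t⌋ = k i} = ENNReal.ofReal (1 / m) := by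
    intro i
    rw [floor_set_eq hm, Real.volume_Ico]
    congr 1
    have hm' : (0 : ℝ) < m := by positivity
    field_simp
    ring
  simp only [this, Finset.prod_const, Finset.card_univ, Fintype.card_fin]

lemma cube_disjoint {m : ℕ} {k k' : Fin d → ℤ} (h : k ≠ k') :
    Disjoint (cube m k) (cube m k') := by
  rw [Set.disjoint_left]
  intro x hx hx'
  exact h (funext fun i => (hx i (Set.mem_univ i)).symm.trans (hx' i (Set.mem_univ i)))

lemma latt_finite {s : Set (Fin d → ℝ)} (hb : Bornology.IsBounded s) {m : ℕ} (hm : m ≠ 0) :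
    (latt s m).Finite := by
  obtain ⟨R, hR⟩ := hb.subset_closedBall 0
  apply Set.Finite.subset (Set.Finite.pi fun _ : Fin d =>
    Set.finite_Icc (-⌈(m : ℝ) * R⌉) ⌈(m : ℝ) * R⌉)
  intro k hk i _
  have hmem := hR hk
  rw [Metric.mem_closedBall, dist_zero_right] at hmem
  have hm' : (0 : ℝ) < m := by positivity
  have h1 : |((k i : ℝ))| / m ≤ R := by
    have := (norm_le_pi_norm (fun i => (k i : ℝ) / m) i).trans hmem
    simpa [Real.norm_eq_abs] using this
  have h2 : |(k i : ℝ)| ≤ (m : ℝ) * R := by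
    rw [div_le_iff₀ hm'] at h1
    linarith
  rw [Set.mem_Icc]
  have := abs_le.mp h2
  constructor
  · have : -((⌈(m : ℝ) * R⌉ : ℝ)) ≤ (k i : ℝ) := by
      have := Int.le_ceil ((m : ℝ) * R); linarith [this, (abs_le.mp h2).1]
    exact_mod_cast this
  · have : (k i : ℝ) ≤ (⌈(m : ℝ) * R⌉ : ℝ) := (abs_le.mp h2).2.trans (Int.le_ceil _)
    exact_mod_cast this

lemma union_cube_eq (s : Set (Fin d → ℝ)) (m : ℕ) :
    ⋃ k ∈ latt s m, cube m k = {x : Fin d → ℝ | (fun i => ((⌊(m : ℝ) * x i⌋ : ℝ)) / m) ∈ s} := by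
  ext x
  simp only [Set.mem_iUnion, Set.mem_setOf_eq]
  constructor
  · rintro ⟨k, hk, hx⟩
    have h : ∀ i, ⌊(m : ℝ) * x i⌋ = k i := fun i => hx i (Set.mem_univ i)
    simpa only [h] using (show (fun i => (k i : ℝ) / m) ∈ s from hk)
  · intro h
    exact ⟨fun i => ⌊(m : ℝ) * x i⌋, h, fun i _ => rfl⟩

lemma tendsto_floor_div (t : ℝ) :
    Tendsto (fun m : ℕ => ((⌊(m : ℝ) * t⌋ : ℝ)) / m) atTop (nhds t) := by
  rw [tendsto_iff_dist_tendsto_zero]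
  apply squeeze_zero' (Eventually.of_forall fun m => dist_nonneg)
    (g := fun m : ℕ => 1 / (m : ℝ))
  · filter_upwards [eventually_ge_atTop 1] with m hm
    have hm' : (0 : ℝ) < m := by exact_mod_cast hm
    rw [Real.dist_eq, abs_le]
    have h1 : (⌊(m : ℝ) * t⌋ : ℝ) ≤ (m : ℝ) * t := Int.floor_le _
    have h2 : (m : ℝ) * t < ⌊(m : ℝ) * t⌋ + 1 := Int.lt_floor_add_one _
    have e1 : ((⌊(m : ℝ) * t⌋ : ℝ)) / m - t = ((⌊(m : ℝ) * t⌋ : ℝ) - m * t) / m := by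
      field_simp
    have hmm : (1 : ℝ) / m * m = 1 := by field_simp
    constructor
    · rw [e1, le_div_iff₀ hm']; nlinarith
    · rw [e1, div_le_iff₀ hm']; nlinarith
  · exact tendsto_one_div_atTop_nhds_zero_nat

theorem tendsto_latt_count (s : Set (Fin d → ℝ)) (hb : Bornology.IsBounded s)
    (hf : volume (frontier s) = 0) :
    Tendsto (fun m : ℕ => (Set.ncard (latt s m) : ℝ) / (m : ℝ) ^ d) atTop
      (nhds (volume s).toReal) := by
  classical
  obtain ⟨R₀, hR₀⟩ := hb.subset_closedBall 0
  set R : ℝ := max R₀ 0 with hRdef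
  have hR : s ⊆ Metric.closedBall 0 R :=
    hR₀.trans (Metric.closedBall_subset_closedBall (le_max_left _ _))
  have hR0 : 0 ≤ R := le_max_right _ _
  set U : ℕ → Set (Fin d → ℝ) :=
    fun m => {x | (fun i => ((⌊(m : ℝ) * x i⌋ : ℝ)) / m) ∈ s} with hUdef
  have hUcube : ∀ m : ℕ, (⋃ k ∈ latt s m, cube m k) = U m := fun m => union_cube_eq s m
  have hUmeas : ∀ m : ℕ, m ≠ 0 → MeasurableSet (U m) := by
    intro m hm
    rw [← hUcube m]
    exact MeasurableSet.biUnion (latt_finite hb hm).countable fun k _ => measurableSet_cube hm k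
  have hUvol : ∀ m : ℕ, m ≠ 0 →
      (volume (U m)).toReal = (Set.ncard (latt s m) : ℝ) / (m : ℝ) ^ d := by
    intro m hm
    have hfin := latt_finite hb (s := s) hm
    have hm' : (0 : ℝ) < m := by positivity
    have hvol : volume (U m) = (hfin.toFinset.card : ENNReal) * ENNReal.ofReal (1 / m) ^ d := by
      have hUnion : (⋃ k ∈ hfin.toFinset, cube m k) = ⋃ k ∈ latt s m, cube m k := by
        ext x; simp [Set.Finite.mem_toFinset]
      rw [← hUcube m, ← hUnion,
        measure_biUnion_finset (fun k _ k' _ hkk' => cube_disjoint hkk')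
          (fun k _ => measurableSet_cube hm k),
        Finset.sum_congr rfl fun k _ => volume_cube hm k, Finset.sum_const, nsmul_eq_mul]
    rw [hvol, ENNReal.toReal_mul, ENNReal.toReal_pow, ENNReal.toReal_ofReal (by positivity),
      ENNReal.toReal_natCast, Set.ncard_eq_toFinset_card _ hfin, one_div, inv_pow,
      div_eq_mul_inv]
  -- dominated convergence
  set F : ℕ → (Fin d → ℝ) → ℝ :=
    fun m => if m = 0 then 0 else (U m).indicator fun _ => (1 : ℝ) with hFdef
  set f : (Fin d → ℝ) → ℝ := (closure s).indicator fun _ => (1 : ℝ) with hfdef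
  set bound : (Fin d → ℝ) → ℝ :=
    (Metric.closedBall (0 : Fin d → ℝ) (R + 1)).indicator fun _ => (1 : ℝ) with hbdef
  have hphi : ∀ x : Fin d → ℝ,
      Tendsto (fun m : ℕ => (fun i => ((⌊(m : ℝ) * x i⌋ : ℝ)) / m)) atTop (nhds x) :=
    fun x => tendsto_pi_nhds.mpr fun i => tendsto_floor_div (x i)
  have key : Tendsto (fun m : ℕ => ∫ a, F m a) atTop (nhds (∫ a, f a)) := by
    apply tendsto_integral_of_dominated_convergence bound
    · intro m
      rcases eq_or_ne m 0 with hm | hm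
      · simp only [hFdef, if_pos hm]
        exact aestronglyMeasurable_const
      · simp only [hFdef, if_neg hm]
        exact (measurable_const.indicator (hUmeas m hm)).aestronglyMeasurable
    · rw [hbdef, integrable_indicator_iff measurableSet_closedBall]
      exact integrableOn_const measure_closedBall_lt_top.ne
    · intro m
      apply Eventually.of_forall
      intro a
      rcases eq_or_ne m 0 with hm | hm
      · simp only [hFdef, hm, if_pos rfl, Pi.zero_apply, norm_zero]
        exact Set.indicator_nonneg (fun _ _ => zero_le_one) a
      · simp only [hFdef, if_neg hm]
        by_cases ha : a ∈ U m
        · have h1 : a ∈ Metric.closedBall (0 : Fin d → ℝ) (R + 1) := by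
            have hφ : (fun i => ((⌊(m : ℝ) * a i⌋ : ℝ)) / m) ∈ s := ha
            have hφn : ‖fun i => ((⌊(m : ℝ) * a i⌋ : ℝ)) / m‖ ≤ R := by
              have := hR hφ
              rwa [Metric.mem_closedBall, dist_zero_right] at this
            have hdiff : ‖a - fun i => ((⌊(m : ℝ) * a i⌋ : ℝ)) / m‖ ≤ 1 := by
              rw [pi_norm_le_iff_of_nonneg zero_le_one]
              intro i
              have hm' : (0 : ℝ) < m := by positivity
              have hm'' : (1 : ℝ) ≤ m := by exact_mod_cast Nat.one_le_iff_ne_zero.mpr hm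
              have h1 : (⌊(m : ℝ) * a i⌋ : ℝ) ≤ (m : ℝ) * a i := Int.floor_le _
              have h2 : (m : ℝ) * a i < ⌊(m : ℝ) * a i⌋ + 1 := Int.lt_floor_add_one _
              have : |a i - ((⌊(m : ℝ) * a i⌋ : ℝ)) / m| ≤ 1 := by
                rw [abs_le]
                constructor
                · rw [neg_le, ← sub_nonneg]
                  have : ((⌊(m : ℝ) * a i⌋ : ℝ)) / m ≤ a i := by
                    rw [div_le_iff₀ hm']; nlinarith
                  nlinarith
                · rw [sub_le_iff_le_add]
                  have : a i < ((⌊(m : ℝ) * a i⌋ : ℝ)) / m + 1 / m := by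
                    rw [← add_div, lt_div_iff₀ hm']; nlinarith
                  have h1m : (1 : ℝ) / m ≤ 1 := by
                    rw [div_le_one hm']; exact hm''
                  linarith
              simpa [Real.norm_eq_abs] using this
            rw [Metric.mem_closedBall, dist_zero_right]
            calc ‖a‖ = ‖(fun i => ((⌊(m : ℝ) * a i⌋ : ℝ)) / m) + (a - fun i => ((⌊(m : ℝ) * a i⌋ : ℝ)) / m)‖ := by
                  congr 1; abel
              _ ≤ ‖fun i => ((⌊(m : ℝ) * a i⌋ : ℝ)) / m‖ + ‖a - fun i => ((⌊(m : ℝ) * a i⌋ : ℝ)) / m‖ :=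
                  norm_add_le _ _
              _ ≤ R + 1 := add_le_add hφn hdiff
          rw [Set.indicator_of_mem ha, hbdef, Set.indicator_of_mem h1]
          simp
        · rw [Set.indicator_of_notMem ha, norm_zero]
          exact Set.indicator_nonneg (fun _ _ => zero_le_one) a
    · have hfr : ∀ᵐ a : Fin d → ℝ, a ∉ frontier s :=
        (ae_iff.mpr (by simpa using hf))
      filter_upwards [hfr] with a ha
      by_cases hc : a ∈ closure s
      · have hint : a ∈ interior s := by
          rcases (closure_eq_interior_union_frontier s ▸ hc) with h | h
          · exact h
          · exact absurd h ha
        have : ∀ᶠ m : ℕ in atTop, F m a = 1 := by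
          have hev : ∀ᶠ m : ℕ in atTop,
              (fun i => ((⌊(m : ℝ) * a i⌋ : ℝ)) / m) ∈ interior s :=
            (hphi a).eventually (isOpen_interior.eventually_mem hint)
          filter_upwards [hev, eventually_ge_atTop 1] with m hmem hm1
          have hm : m ≠ 0 := by omega
          have : a ∈ U m := interior_subset (s := s) hmem
          simp [hFdef, if_neg hm, Set.indicator_of_mem this]
        rw [hfdef, Set.indicator_of_mem hc]
        exact Tendsto.congr' (this.mono fun m hm => hm.symm) tendsto_const_nhds
      · have : ∀ᶠ m : ℕ in atTop, F m a = 0 := by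
          have hop : IsOpen (closure s)ᶜ := isClosed_closure.isOpen_compl
          have hev : ∀ᶠ m : ℕ in atTop,
              (fun i => ((⌊(m : ℝ) * a i⌋ : ℝ)) / m) ∈ (closure s)ᶜ :=
            (hphi a).eventually (hop.eventually_mem hc)
          filter_upwards [hev] with m hmem
          rcases eq_or_ne m 0 with hm | hm
          · simp [hFdef, hm]
          · have : a ∉ U m := fun h => hmem (subset_closure h)
            simp [hFdef, if_neg hm, Set.indicator_of_notMem this]
        rw [hfdef, Set.indicator_of_notMem hc]
        exact Tendsto.congr' (this.mono fun m hm => hm.symm) tendsto_const_nhds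
  have hclos : volume (closure s) = volume s := by
    refine le_antisymm ?_ (measure_mono subset_closure)
    calc volume (closure s) = volume (s ∪ frontier s) := by rw [closure_eq_self_union_frontier]
      _ ≤ volume s + volume (frontier s) := measure_union_le _ _
      _ = volume s := by rw [hf, add_zero]
  have hintf : ∫ a, f a = (volume s).toReal := by
    rw [hfdef, integral_indicator_const (1 : ℝ) isClosed_closure.measurableSet, smul_eq_mul,
      mul_one, measureReal_def, hclos]
  rw [← hintf]
  apply Tendsto.congr' _ key
  filter_upwards [eventually_ge_atTop 1] with m hm1
  have hm : m ≠ 0 := by omega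
  rw [hFdef]
  simp only [if_neg hm]
  rw [integral_indicator_const (1 : ℝ) (hUmeas m hm), smul_eq_mul, mul_one, measureReal_def, hUvol m hm]


/-- Reshape a matrix into a vector (inverse of `gammaMapR`, over `ℕ`). -/
def vecM {n : ℕ} (M : Matrix (Fin n) (Fin n) ℕ) : Fin (n ^ 2) → ℕ :=
  fun l => M ⟨l.1 / n, by
      have h := l.2
      have hn : 0 < n := by
        by_contra h0
        interval_cases n <;> simp_all
      exact (Nat.div_lt_iff_lt_mul hn).mpr (by simpa [pow_two] using h)⟩
    ⟨l.1 % n, by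
      have h := l.2
      have hn : 0 < n := by
        by_contra h0
        interval_cases n <;> simp_all
      exact Nat.mod_lt _ hn⟩

lemma pair_div {n : ℕ} (i j : Fin n) : (i.1 * n + j.1) / n = i.1 := by
  rw [mul_comm, Nat.mul_add_div i.pos, Nat.div_eq_of_lt j.2, add_zero]

lemma pair_mod {n : ℕ} (i j : Fin n) : (i.1 * n + j.1) % n = j.1 := by
  rw [mul_comm, Nat.mul_add_mod, Nat.mod_eq_of_lt j.2]

lemma vecM_gamma {n : ℕ} (w : Fin (n ^ 2) → ℕ) :
    vecM (fun i j => w ⟨i.1 * n + j.1, by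
      have hi := i.2; have hj := j.2
      have h : i.1 * n + j.1 < n * n := by nlinarith
      simpa [pow_two] using h⟩) = w := by
  funext l
  show w ⟨l.1 / n * n + l.1 % n, _⟩ = w l
  congr 1
  exact Fin.ext (by simpa [mul_comm] using Nat.div_add_mod l.1 n)

lemma vecM_index {n : ℕ} (M : Matrix (Fin n) (Fin n) ℕ) (i j : Fin n)
    (hp : i.1 * n + j.1 < n ^ 2) : vecM M ⟨i.1 * n + j.1, hp⟩ = M i j := by
  have hn : 0 < n := i.pos
  have hdiv := pair_div i j
  have hmod := pair_mod i j
  simp only [vecM]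
  congr 1 <;> exact Fin.ext (by simp [hdiv, hmod])

/-- The index pairing as an equiv. -/
lemma sum_reindex {n : ℕ} {M : Type*} [AddCommMonoid M] (f : Fin (n ^ 2) → M) :
    ∑ l, f l = ∑ i : Fin n, ∑ j : Fin n, f ⟨i.1 * n + j.1, by
      have hi := i.2; have hj := j.2
      have h : i.1 * n + j.1 < n * n := by nlinarith
      simpa [pow_two] using h⟩ := by
  set e : Fin n × Fin n → Fin (n ^ 2) := fun p => ⟨p.1.1 * n + p.2.1, by
      have hi := p.1.2; have hj := p.2.2
      have h : p.1.1 * n + p.2.1 < n * n := by nlinarith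
      simpa [pow_two] using h⟩ with he
  have hinj : Function.Injective e := by
    intro p q h
    have hval : p.1.1 * n + p.2.1 = q.1.1 * n + q.2.1 := congrArg Fin.val h
    have h1 : p.1.1 = q.1.1 := by
      have := congrArg (· / n) hval
      simpa [pair_div] using this
    have h2 : p.2.1 = q.2.1 := by
      have := congrArg (· % n) hval
      simpa [pair_mod, Nat.mod_eq_of_lt p.2.2, Nat.mod_eq_of_lt q.2.2] using this
    exact Prod.ext (Fin.ext h1) (Fin.ext h2)
  have hbij : Function.Bijective e :=
    (Fintype.bijective_iff_injective_and_card e).mpr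
      ⟨hinj, by simp [Fintype.card_prod, pow_two]⟩
  rw [← Fintype.sum_bijective e hbij (fun p => f (e p)) f (fun p => rfl),
    Fintype.sum_prod_type]

lemma sum_vecM {n : ℕ} (M : Matrix (Fin n) (Fin n) ℕ) :
    ∑ l, vecM M l = ∑ i, ∑ j, M i j := by
  rw [sum_reindex (vecM M)]
  exact Finset.sum_congr rfl fun i _ => Finset.sum_congr rfl fun j _ => vecM_index M i j _

lemma sum_split {N : ℕ} (hN : 0 < N) {M : Type*} [AddCommMonoid M] (x : Fin N → M) :
    ∑ l, x l = (∑ i : Fin (N - 1), x ⟨i.1, lt_of_lt_of_le i.2 (Nat.sub_le _ 1)⟩)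
      + x ⟨N - 1, Nat.sub_lt hN one_pos⟩ := by
  obtain ⟨D, rfl⟩ : ∃ D, N = D + 1 := ⟨N - 1, (Nat.succ_pred_eq_of_pos hN).symm⟩
  rw [Fin.sum_univ_castSucc]
  rfl


/-- Completes a vector of `ℝ^{n²-1}` to a point of the simplex. -/
def extRe (n : ℕ) (y : Fin (n ^ 2 - 1) → ℝ) : Fin (n ^ 2) → ℝ :=
  fun l => if h : l.1 < n ^ 2 - 1 then y ⟨l.1, h⟩ else 1 - ∑ i, y i

lemma proj_ext (n : ℕ) (y : Fin (n ^ 2 - 1) → ℝ) : projMap n (extRe n y) = y :=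
  funext fun i => by simp [projMap, extRe, i.2]

lemma sum_ext {n : ℕ} (hn : 0 < n) (y : Fin (n ^ 2 - 1) → ℝ) :
    ∑ l, extRe n y l = 1 := by
  have hN : 0 < n ^ 2 := by positivity
  rw [sum_split hN (extRe n y)]
  have h1 : ∀ i : Fin (n ^ 2 - 1),
      extRe n y ⟨i.1, lt_of_lt_of_le i.2 (Nat.sub_le _ 1)⟩ = y i := by
    intro i; simp [extRe, i.2]
  have h2 : extRe n y ⟨n ^ 2 - 1, Nat.sub_lt hN one_pos⟩ = 1 - ∑ i, y i := by
    simp [extRe]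
  rw [Finset.sum_congr rfl fun i _ => h1 i, h2]
  ring

lemma ext_proj {n : ℕ} (hn : 0 < n) (x : Fin (n ^ 2) → ℝ) (hx : ∑ l, x l = 1) :
    extRe n (projMap n x) = x := by
  have hN : 0 < n ^ 2 := by positivity
  funext l
  by_cases h : l.1 < n ^ 2 - 1
  · simp [extRe, dif_pos h, projMap]
  · have hl : l.1 = n ^ 2 - 1 := by omega
    simp only [extRe, dif_neg h]
    have hs := sum_split hN x
    rw [hx] at hs
    have : x ⟨n ^ 2 - 1, Nat.sub_lt hN one_pos⟩
        = 1 - ∑ i : Fin (n ^ 2 - 1), x ⟨i.1, lt_of_lt_of_le i.2 (Nat.sub_le _ 1)⟩ := by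
      linarith [hs]
    have hproj : ∀ i : Fin (n ^ 2 - 1), projMap n x i = x ⟨i.1, lt_of_lt_of_le i.2 (Nat.sub_le _ 1)⟩ :=
      fun i => rfl
    rw [Finset.sum_congr rfl fun i _ => hproj i, ← this]
    congr 1
    exact Fin.ext hl.symm

lemma image_proj {n : ℕ} (hn : 0 < n) (A : Set (Fin (n ^ 2) → ℝ))
    (hA : ∀ x ∈ A, ∑ l, x l = 1) :
    projMap n '' A = {y | extRe n y ∈ A} := by
  ext y
  constructor
  · rintro ⟨x, hx, rfl⟩
    have : extRe n (projMap n x) = x := ext_proj hn x (hA x hx)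
    simpa [this] using hx
  · intro h
    exact ⟨extRe n y, h, proj_ext n y⟩

lemma count_eq {n : ℕ} (hn : 0 < n) {m : ℕ} (hm : m ≠ 0)
    (p : Matrix (Fin n) (Fin n) ℕ → Prop) (A : Set (Fin (n ^ 2) → ℝ))
    (hA : A ⊆ {x | (∀ i, 0 ≤ x i) ∧ ∑ i, x i = 1})
    (hp : ∀ M : Matrix (Fin n) (Fin n) ℕ, (∑ i, ∑ j, M i j = m) →
      (p M ↔ (fun l => (vecM M l : ℝ) / m) ∈ A)) :
    Set.ncard {M : Matrix (Fin n) (Fin n) ℕ | (∑ i, ∑ j, M i j = m) ∧ p M}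
      = Set.ncard (latt {y | extRe n y ∈ A} m) := by
  classical
  have hN : 0 < n ^ 2 := by positivity
  have hm' : (0 : ℝ) < m := by positivity
  set d := n ^ 2 - 1 with hd
  set Φ : Matrix (Fin n) (Fin n) ℕ → (Fin d → ℤ) :=
    fun M i => (vecM M ⟨i.1, lt_of_lt_of_le i.2 (Nat.sub_le _ 1)⟩ : ℤ) with hΦ
  -- key: for M with row sum m, the rescaled extension equals the rescaled vector
  have hext : ∀ M : Matrix (Fin n) (Fin n) ℕ, (∑ i, ∑ j, M i j = m) →
      extRe n (fun i => ((Φ M i : ℝ)) / m) = fun l => (vecM M l : ℝ) / m := by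
    intro M hsum
    funext l
    by_cases h : l.1 < n ^ 2 - 1
    · simp [extRe, dif_pos h, hΦ]
    · have hl : l.1 = n ^ 2 - 1 := by omega
      simp only [extRe, dif_neg h, hΦ]
      have hs := sum_split hN (fun l => (vecM M l : ℝ) / m)
      have htot : ∑ l, ((vecM M l : ℝ)) / m = 1 := by
        rw [← Finset.sum_div]
        rw [show ∑ l, ((vecM M l : ℝ)) = ((∑ l, vecM M l : ℕ) : ℝ) by push_cast; rfl]
        rw [sum_vecM, hsum]
        field_simp
      rw [htot] at hs
      push_cast
      rw [show (l : Fin (n ^ 2)) = ⟨n ^ 2 - 1, Nat.sub_lt hN one_pos⟩ from Fin.ext hl]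
      linarith [hs]
  have hinj : Set.InjOn Φ {M | (∑ i, ∑ j, M i j = m) ∧ p M} := by
    rintro M ⟨hM, _⟩ M' ⟨hM', _⟩ hMM'
    have hvec : vecM M = vecM M' := by
      funext l
      by_cases h : l.1 < n ^ 2 - 1
      · have := congrFun hMM' ⟨l.1, h⟩
        simp only [hΦ] at this
        have := Int.ofNat.inj this
        simpa [Fin.eta] using this
      · have hl : l.1 = n ^ 2 - 1 := by omega
        have hsM := sum_split hN (vecM M)
        have hsM' := sum_split hN (vecM M')
        rw [sum_vecM, hM] at hsM
        rw [sum_vecM, hM'] at hsM'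
        have hfirst : (∑ i : Fin (n ^ 2 - 1), vecM M ⟨i.1, lt_of_lt_of_le i.2 (Nat.sub_le _ 1)⟩)
            = ∑ i : Fin (n ^ 2 - 1), vecM M' ⟨i.1, lt_of_lt_of_le i.2 (Nat.sub_le _ 1)⟩ := by
          apply Finset.sum_congr rfl
          intro i _
          have := congrFun hMM' i
          simp only [hΦ] at this
          exact Int.ofNat.inj this
        have : vecM M ⟨n ^ 2 - 1, Nat.sub_lt hN one_pos⟩
            = vecM M' ⟨n ^ 2 - 1, Nat.sub_lt hN one_pos⟩ := by omega
        rw [show (l : Fin (n ^ 2)) = ⟨n ^ 2 - 1, Nat.sub_lt hN one_pos⟩ from Fin.ext hl]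
        exact this
    funext i j
    have := congrFun hvec ⟨i.1 * n + j.1, by
      have hi := i.2; have hj := j.2
      have h : i.1 * n + j.1 < n * n := by nlinarith
      simpa [pow_two] using h⟩
    rwa [vecM_index, vecM_index] at this
  have himg : Φ '' {M | (∑ i, ∑ j, M i j = m) ∧ p M} = latt {y | extRe n y ∈ A} m := by
    ext k
    constructor
    · rintro ⟨M, ⟨hM, hpM⟩, rfl⟩
      show extRe n (fun i => ((Φ M i : ℝ)) / m) ∈ A
      rw [hext M hM]
      exact (hp M hM).mp hpM
    · intro hk
      have hkA : extRe n (fun i => ((k i : ℝ)) / m) ∈ A := hk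
      obtain ⟨hnn, hsum1⟩ := hA hkA
      -- each k i is nonneg
      have hknn : ∀ i : Fin d, 0 ≤ k i := by
        intro i
        have := hnn ⟨i.1, lt_of_lt_of_le i.2 (Nat.sub_le _ 1)⟩
        simp only [extRe, dif_pos i.2] at this
        have h2 : (0 : ℝ) ≤ (k i : ℝ) / m := by simpa [Fin.eta, show i.1 < n ^ 2 - 1 from i.2] using this
        rcases div_nonneg_iff.mp h2 with ⟨h3, _⟩ | ⟨_, h4⟩
        · exact_mod_cast h3
        · linarith
      -- the sum of the k i is at most m
      have hlast := hnn ⟨n ^ 2 - 1, Nat.sub_lt hN one_pos⟩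
      have hlast' : (0 : ℝ) ≤ 1 - ∑ i : Fin d, (k i : ℝ) / m := by
        simpa [extRe, lt_irrefl] using hlast
      have he : ∀ i : Fin d, (((k i).toNat : ℝ)) = ((k i : ℝ)) := by
        intro i
        exact_mod_cast congrArg (fun z : ℤ => (z : ℝ)) (Int.toNat_of_nonneg (hknn i))
      have hsumle : ∑ i : Fin d, ((k i).toNat : ℝ) ≤ m := by
        rw [Finset.sum_congr rfl fun i _ => he i]
        have : ∑ i : Fin d, (k i : ℝ) / m = (∑ i : Fin d, (k i : ℝ)) / m := by
          rw [Finset.sum_div]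
        rw [this] at hlast'
        rw [← sub_nonneg]
        have := mul_nonneg hlast' hm'.le
        calc (0 : ℝ) ≤ (1 - (∑ i : Fin d, (k i : ℝ)) / m) * m := this
          _ = m - ∑ i : Fin d, (k i : ℝ) := by field_simp
      have hsle : ∑ i : Fin d, (k i).toNat ≤ m := by
        have : ((∑ i : Fin d, (k i).toNat : ℕ) : ℝ) ≤ (m : ℝ) := by push_cast; exact hsumle
        exact_mod_cast this
      -- construct the matrix
      set v : Fin (n ^ 2) → ℕ := fun l =>
        if h : l.1 < n ^ 2 - 1 then (k ⟨l.1, h⟩).toNat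
        else m - ∑ i : Fin d, (k i).toNat with hv
      set M : Matrix (Fin n) (Fin n) ℕ := fun i j => v ⟨i.1 * n + j.1, by
        have hi := i.2; have hj := j.2
        have h : i.1 * n + j.1 < n * n := by nlinarith
        simpa [pow_two] using h⟩ with hMdef
      have hvecv : vecM M = v := vecM_gamma v
      have hvfirst : ∀ i : Fin d, v ⟨i.1, lt_of_lt_of_le i.2 (Nat.sub_le _ 1)⟩ = (k i).toNat := by
        intro i; simp only [hv]; rw [dif_pos (show i.1 < n ^ 2 - 1 from i.2)]
      have hsumM : ∑ i, ∑ j, M i j = m := by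
        rw [← sum_vecM, hvecv, sum_split hN v,
          Finset.sum_congr rfl fun (i : Fin (n ^ 2 - 1)) _ => hvfirst i]
        have hvlast : v ⟨n ^ 2 - 1, Nat.sub_lt hN one_pos⟩ = m - ∑ i : Fin d, (k i).toNat := by
          simp [hv]
        rw [hvlast]
        show (∑ i : Fin d, (k i).toNat) + (m - ∑ i : Fin d, (k i).toNat) = m
        omega
      have hveq : (fun l => ((v l : ℝ)) / m) = extRe n (fun i => ((k i : ℝ)) / m) := by
        funext l
        by_cases h : l.1 < n ^ 2 - 1
        · simp only [hv, extRe, dif_pos h]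
          congr 1
          exact_mod_cast congrArg (fun z : ℤ => (z : ℝ)) (Int.toNat_of_nonneg (hknn ⟨l.1, h⟩))
        · simp only [hv, extRe, dif_neg h]
          rw [Nat.cast_sub hsle]
          push_cast
          rw [Finset.sum_congr rfl fun (i : Fin d) _ => he i,
            show (∑ x : Fin (n ^ 2 - 1), ((k x : ℝ)) / m) = ∑ x : Fin d, ((k x : ℝ)) / m from rfl,
            ← Finset.sum_div]
          field_simp
      have hpM : p M := by
        apply (hp M hsumM).mpr
        have : (fun l => ((vecM M l : ℝ)) / m) = extRe n (fun i => ((k i : ℝ)) / m) := by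
          rw [hvecv]; exact hveq
        rw [this]
        exact hkA
      refine ⟨M, ⟨hsumM, hpM⟩, ?_⟩
      funext i
      show ((vecM M ⟨i.1, lt_of_lt_of_le i.2 (Nat.sub_le _ 1)⟩ : ℕ) : ℤ) = k i
      rw [hvecv, hvfirst i]
      exact Int.toNat_of_nonneg (hknn i)
  calc Set.ncard {M : Matrix (Fin n) (Fin n) ℕ | (∑ i, ∑ j, M i j = m) ∧ p M}
      = Set.ncard (Φ '' {M | (∑ i, ∑ j, M i j = m) ∧ p M}) :=
        (Set.ncard_image_of_injOn hinj).symm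
    _ = _ := by rw [himg]


lemma volpos (D : ℕ) :
    0 < volume {y : Fin D → ℝ | (∀ i, 0 ≤ y i) ∧ ∑ i, y i ≤ 1} := by
  set O : Set (Fin D → ℝ) := (⋂ i : Fin D, {y | 0 < y i}) ∩ {y | ∑ i, y i < 1} with hO
  have hOopen : IsOpen O := by
    apply IsOpen.inter
    · exact isOpen_iInter_of_finite fun i =>
        isOpen_lt continuous_const (continuous_apply i)
    · exact isOpen_lt (continuous_finset_sum _ fun i _ => continuous_apply i)
        continuous_const
  have hOne : O.Nonempty := by
    refine ⟨fun _ => 1 / (2 * (D + 1)), ?_, ?_⟩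
    · simp only [Set.mem_iInter, Set.mem_setOf_eq]
      intro i
      positivity
    · simp only [Set.mem_setOf_eq, Finset.sum_const, Finset.card_univ, Fintype.card_fin,
        nsmul_eq_mul]
      rw [div_eq_mul_inv, ← mul_assoc]
      have hD1 : (0 : ℝ) < 2 * (D + 1) := by positivity
      rw [mul_one, ← div_eq_mul_inv, div_lt_one hD1]
      push_cast
      linarith
  have hOsub : O ⊆ {y : Fin D → ℝ | (∀ i, 0 ≤ y i) ∧ ∑ i, y i ≤ 1} := by
    rintro y ⟨h1, h2⟩
    simp only [Set.mem_iInter, Set.mem_setOf_eq] at h1 h2 ⊢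
    exact ⟨fun i => (h1 i).le, le_of_lt h2⟩
  exact (hOopen.measure_pos volume hOne).trans_le (measure_mono hOsub)

end SigAux

open SigAux in
/-- If `σ(M) = σ((1/ΣM)·M)` for every nonzero natural matrix `M`, and the set
`S = {x ∈ Δ^{(n²-1)} : σ(γ(x)) < c}` is Riemann (Jordan) measurable after
projection, then `ϱ_{σ,n,m}(c) → ρ_{σ,n}(c) = V(π(S))/V(π(Δ^{(n²-1)}))` as
`m → ∞`. -/
theorem significativity_limit (n : ℕ) (hn : 1 ≤ n)
    (σ : Matrix (Fin n) (Fin n) ℝ → ℝ) (c : ℝ)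
    (hσ : ∀ M : Matrix (Fin n) (Fin n) ℕ, (∑ i, ∑ j, M i j ≠ 0) →
      σ (fun i j => (M i j : ℝ)) =
        σ (fun i j => (M i j : ℝ) / ((∑ i, ∑ j, M i j : ℕ) : ℝ)))
    (S : Set (Fin (n ^ 2) → ℝ))
    (hS : S = {x | ((∀ i, 0 ≤ x i) ∧ ∑ i, x i = 1) ∧ σ (gammaMapR n x) < c})
    (hmeas : volume (frontier (projMap n '' S)) = 0) :
    Tendsto (fun m : ℕ =>
        (Set.ncard {M : Matrix (Fin n) (Fin n) ℕ |
            (∑ i, ∑ j, M i j = m) ∧ σ (fun i j => (M i j : ℝ)) < c} : ℝ) /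
          (Set.ncard {M : Matrix (Fin n) (Fin n) ℕ | ∑ i, ∑ j, M i j = m} : ℝ))
      atTop
      (nhds ((volume (projMap n '' S)).toReal /
        (volume (projMap n ''
          {x : Fin (n ^ 2) → ℝ | (∀ i, 0 ≤ x i) ∧ ∑ i, x i = 1})).toReal)) := by
  classical
  have hn0 : 0 < n := hn
  have hN : 0 < n ^ 2 := by positivity
  set Δ : Set (Fin (n ^ 2) → ℝ) := {x | (∀ i, 0 ≤ x i) ∧ ∑ i, x i = 1} with hΔ
  set S' : Set (Fin (n ^ 2 - 1) → ℝ) := {y | extRe n y ∈ S} with hS'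
  set Δ' : Set (Fin (n ^ 2 - 1) → ℝ) := {y | (∀ i, 0 ≤ y i) ∧ ∑ i, y i ≤ 1} with hΔ'
  -- projections
  have hprojS : projMap n '' S = S' :=
    image_proj hn0 S (fun x hx => by rw [hS] at hx; exact hx.1.2)
  have hprojΔ : projMap n '' Δ = {y | extRe n y ∈ Δ} := image_proj hn0 Δ (fun x hx => hx.2)
  have hΔeq : {y : Fin (n ^ 2 - 1) → ℝ | extRe n y ∈ Δ} = Δ' := by
    ext y
    constructor
    · rintro ⟨h1, _⟩
      constructor
      · intro i
        have := h1 ⟨i.1, lt_of_lt_of_le i.2 (Nat.sub_le _ 1)⟩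
        simpa [extRe, i.2] using this
      · have := h1 ⟨n ^ 2 - 1, Nat.sub_lt hN one_pos⟩
        have h2 : (0 : ℝ) ≤ 1 - ∑ i, y i := by simpa [extRe, lt_irrefl] using this
        linarith
    · rintro ⟨hnn, hle⟩
      refine ⟨?_, sum_ext hn0 y⟩
      intro l
      by_cases h : l.1 < n ^ 2 - 1
      · simpa [extRe, h] using hnn ⟨l.1, h⟩
      · simp only [extRe, dif_neg h]
        linarith
    -- membership conditions
  have hsub' : S' ⊆ Δ' := by
    rw [← hΔeq]
    intro y hy
    have : extRe n y ∈ S := hy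
    rw [hS] at this
    exact this.1
  -- boundedness
  have hΔ'bd : Bornology.IsBounded Δ' := by
    apply Metric.isBounded_closedBall (x := (0 : Fin (n ^ 2 - 1) → ℝ)) (r := 1) |>.subset
    intro y hy
    rw [Metric.mem_closedBall, dist_zero_right]
    rw [pi_norm_le_iff_of_nonneg zero_le_one]
    intro i
    rw [Real.norm_eq_abs, abs_le]
    have h1 : 0 ≤ y i := hy.1 i
    have h2 : y i ≤ ∑ j, y j :=
      Finset.single_le_sum (fun j _ => hy.1 j) (Finset.mem_univ i)
    have := hy.2
    constructor <;> linarith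
  have hS'bd : Bornology.IsBounded S' := hΔ'bd.subset hsub'
  -- frontier conditions
  have hfS : volume (frontier S') = 0 := by rw [← hprojS]; exact hmeas
  have hconv : Convex ℝ Δ' := by
    intro y hy z hz a b ha hb hab
    constructor
    · intro i
      have := hy.1 i; have := hz.1 i
      have : 0 ≤ a * y i + b * z i := by positivity
      simpa using this
    · have h1 := hy.2
      have h2 := hz.2
      have : ∑ i, (a * y i + b * z i) = a * ∑ i, y i + b * ∑ i, z i := by
        rw [Finset.sum_add_distrib, ← Finset.mul_sum, ← Finset.mul_sum]
      simp only [Pi.add_apply, Pi.smul_apply, smul_eq_mul]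
      rw [this]
      nlinarith
  have hfΔ : volume (frontier Δ') = 0 := hconv.addHaar_frontier volume
  -- positivity and finiteness of the volume of Δ'
  have hvolpos : 0 < volume Δ' := by rw [hΔ']; exact volpos _
  have hvolfin : volume Δ' < ⊤ := by
    obtain ⟨R, hR⟩ := hΔ'bd.subset_closedBall 0
    exact lt_of_le_of_lt (measure_mono hR) measure_closedBall_lt_top
  have hvolne : (volume Δ').toReal ≠ 0 :=
    (ENNReal.toReal_pos hvolpos.ne' hvolfin.ne).ne'
  -- the two limits
  have h1 := tendsto_latt_count S' hS'bd hfS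
  have h2 := tendsto_latt_count Δ' hΔ'bd hfΔ
  rw [hprojS, hprojΔ, hΔeq]
  apply Tendsto.congr' _ (h1.div h2 hvolne)
  filter_upwards [eventually_ge_atTop 1] with m hm1
  simp only [Pi.div_apply]
  have hm : m ≠ 0 := by omega
  have hm' : (0 : ℝ) < m := by positivity
  -- counting identification, numerator
  have hσiff : ∀ M : Matrix (Fin n) (Fin n) ℕ, (∑ i, ∑ j, M i j = m) →
      ((σ fun i j => (M i j : ℝ)) < c ↔ (fun l => ((vecM M l : ℝ)) / m) ∈ S) := by
    intro M hsum
    have hγ : (gammaMapR n fun l => ((vecM M l : ℝ)) / m) = fun i j => (M i j : ℝ) / m := by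
      funext i j
      show ((vecM M ⟨i.1 * n + j.1, _⟩ : ℕ) : ℝ) / m = (M i j : ℝ) / m
      rw [vecM_index]
    have hσM : σ (fun i j => (M i j : ℝ)) = σ (gammaMapR n fun l => ((vecM M l : ℝ)) / m) := by
      rw [hγ]
      have hne : ∑ i, ∑ j, M i j ≠ 0 := by rw [hsum]; exact hm
      have := hσ M hne
      rw [hsum] at this
      exact this
    have hnn : ∀ l, 0 ≤ ((vecM M l : ℝ)) / m := fun l => by positivity
    have hsum1 : ∑ l, ((vecM M l : ℝ)) / m = 1 := by
      rw [← Finset.sum_div,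
        show ∑ l, ((vecM M l : ℝ)) = ((∑ l, vecM M l : ℕ) : ℝ) by push_cast; rfl,
        sum_vecM, hsum]
      field_simp
    rw [hS]
    simp only [Set.mem_setOf_eq]
    rw [← hσM]
    simp [hnn, hsum1]
  have cnum : Set.ncard {M : Matrix (Fin n) (Fin n) ℕ |
      (∑ i, ∑ j, M i j = m) ∧ σ (fun i j => (M i j : ℝ)) < c} = Set.ncard (latt S' m) := by
    have hsubS : S ⊆ {x | (∀ i, 0 ≤ x i) ∧ ∑ i, x i = 1} := by
      rw [hS]; intro x hx; exact hx.1
    exact count_eq hn0 hm (fun M => σ (fun i j => (M i j : ℝ)) < c) S hsubS hσiff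
  -- counting identification, denominator
  have cden : Set.ncard {M : Matrix (Fin n) (Fin n) ℕ | ∑ i, ∑ j, M i j = m}
      = Set.ncard (latt Δ' m) := by
    have htriv : ∀ M : Matrix (Fin n) (Fin n) ℕ, (∑ i, ∑ j, M i j = m) →
        (True ↔ (fun l => ((vecM M l : ℝ)) / m) ∈ Δ) := by
      intro M hsum
      have hnn : ∀ l, 0 ≤ ((vecM M l : ℝ)) / m := fun l => by positivity
      have hsum1 : ∑ l, ((vecM M l : ℝ)) / m = 1 := by
        rw [← Finset.sum_div,
          show ∑ l, ((vecM M l : ℝ)) = ((∑ l, vecM M l : ℕ) : ℝ) by push_cast; rfl,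
          sum_vecM, hsum]
        field_simp
      exact ⟨fun _ => ⟨hnn, hsum1⟩, fun _ => trivial⟩
    have := count_eq hn0 hm (fun _ => True) Δ le_rfl htriv
    rw [hΔeq] at this
    rw [← this]
    congr 1
    ext M
    simp
  rw [cnum, cden]
  -- algebra: (a / c) / (b / c) = a / b for c ≠ 0
  have hc : ((m : ℝ)) ^ (n ^ 2 - 1) ≠ 0 := by positivity
  set a : ℝ := (Set.ncard (latt S' m) : ℝ)
  set b : ℝ := (Set.ncard (latt Δ' m) : ℝ)
  set cc : ℝ := ((m : ℝ)) ^ (n ^ 2 - 1)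
  calc a / cc / (b / cc) = (a * cc⁻¹) / (b * cc⁻¹) := by
        rw [div_eq_mul_inv a cc, div_eq_mul_inv b cc]
    _ = a / b := mul_div_mul_right a b (inv_ne_zero hc)
end

section
/- For weak compositions of m into k parts under lexicographic order, the first component ℓ_1 of the i-th composition (0-indexed) is the unique natural number satisfying Σ_{j=0}^{ℓ_1-1} C((m-j)+(k-1)-1, m-j) ≤ i < Σ_{j=0}^{ℓ_1} C((m-j)+(k-1)-1, m-j). -/
lemma slice_card (k m j : ℕ) (hj : j ≤ m) :
    ((Finset.Nat.antidiagonalTuple (k+1) m).filter (fun a => a 0 = j)).card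
      = (Finset.Nat.antidiagonalTuple k (m-j)).card := by
  classical
  refine Finset.card_bij' (fun a _ => Fin.tail a) (fun b _ => Fin.cons j b) ?_ ?_ ?_ ?_
  · intro a ha
    simp only [Finset.mem_filter, Finset.Nat.mem_antidiagonalTuple] at ha
    obtain ⟨hs, h0⟩ := ha
    rw [Fin.sum_univ_succ] at hs
    simp only [Finset.Nat.mem_antidiagonalTuple, Fin.tail]
    omega
  · intro b hb
    simp only [Finset.Nat.mem_antidiagonalTuple] at hb
    have hc : ∑ x, Fin.cons (α := fun _ => ℕ) j b x = j + ∑ x, b x := by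
      rw [Fin.sum_univ_succ]; simp
    simp only [Finset.mem_filter, Finset.Nat.mem_antidiagonalTuple, hc, Fin.cons_zero,
      and_true]
    omega
  · intro a ha
    simp only [Finset.mem_filter] at ha
    show Fin.cons j (Fin.tail a) = a
    rw [← ha.2, Fin.cons_self_tail]
  · intro b _
    simp only [Fin.tail_cons]

lemma antid_card (k m : ℕ) :
    (Finset.Nat.antidiagonalTuple (k+1) m).card = (m+k).choose m := by
  classical
  induction k generalizing m with
  | zero => simp [Finset.Nat.antidiagonalTuple_one]
  | succ k ih =>
    have H : ∀ a ∈ Finset.Nat.antidiagonalTuple (k+1+1) m,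
        (fun a : Fin (k+1+1) → ℕ => a 0) a ∈ Finset.range (m+1) := by
      intro a ha
      show a 0 ∈ Finset.range (m+1)
      simp only [Finset.Nat.mem_antidiagonalTuple] at ha
      rw [Finset.mem_range]
      have : a 0 ≤ ∑ x, a x :=
        Finset.single_le_sum (fun i _ => Nat.zero_le (a i)) (Finset.mem_univ 0)
      omega
    have hcard := Finset.card_eq_sum_card_fiberwise H
    beta_reduce at hcard
    rw [hcard]
    clear hcard H
    have hfib : ∀ j ∈ Finset.range (m+1),
        ((Finset.Nat.antidiagonalTuple (k+1+1) m).filter (fun a => a 0 = j)).card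
          = ((m-j)+k).choose (m-j) := by
      intro j hj
      rw [Finset.mem_range] at hj
      rw [slice_card (k+1) m j (by omega), ih]
    rw [Finset.sum_congr rfl hfib]
    have hrefl := Finset.sum_range_reflect (fun t => ((m-t)+k).choose (m-t)) (m+1)
    rw [show ∑ j ∈ Finset.range (m+1), ((m-j)+k).choose (m-j)
        = ∑ j ∈ Finset.range (m+1), (j+k).choose j from by
      rw [← hrefl]
      apply Finset.sum_congr rfl
      intro t ht
      rw [Finset.mem_range] at ht
      congr 1 <;> omega]
    have hsymm : ∀ t : ℕ, (t+k).choose t = (t+k).choose k := by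
      intro t
      have := Nat.choose_symm (n := t + k) (k := k) (Nat.le_add_left k t)
      simpa using this
    rw [Finset.sum_congr rfl (fun t _ => hsymm t), Nat.sum_range_add_choose m k]
    have h2 := Nat.choose_symm (n := m + k + 1) (k := k + 1) (by omega)
    rw [show m + k + 1 - (k+1) = m from by omega] at h2
    rw [show m + (k+1) = m + k + 1 from by omega]
    exact h2.symm

/-- The first component `ℓ₁` of the `i`-th weak composition of `m` into `k ≥ 2`
parts in lexicographic order (the position `i` being the number of strictly
lex-smaller weak compositions) is the unique natural number satisfying
`Σ_{j=0}^{ℓ₁-1} C((m-j)+(k-1)-1, m-j) ≤ i < Σ_{j=0}^{ℓ₁} C((m-j)+(k-1)-1, m-j)`. -/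
theorem lex_enumeration_first_component (m k : ℕ) (hk : 2 ≤ k)
    (ℓ : Fin k → ℕ) (hsum : ∑ j, ℓ j = m)
    (i : ℕ) (hilt : i < (m + k - 1).choose m)
    (hi : i = Set.ncard {a : Fin k → ℕ | ∑ j, a j = m ∧ toLex a < toLex ℓ}) :
    (∑ j ∈ Finset.range (ℓ ⟨0, Nat.lt_of_lt_of_le Nat.zero_lt_two hk⟩),
          ((m - j) + (k - 1) - 1).choose (m - j) ≤ i ∧
        i < ∑ j ∈ Finset.range (ℓ ⟨0, Nat.lt_of_lt_of_le Nat.zero_lt_two hk⟩ + 1),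
          ((m - j) + (k - 1) - 1).choose (m - j)) ∧
      ∀ l : ℕ,
        (∑ j ∈ Finset.range l, ((m - j) + (k - 1) - 1).choose (m - j) ≤ i ∧
          i < ∑ j ∈ Finset.range (l + 1), ((m - j) + (k - 1) - 1).choose (m - j)) →
        l = ℓ ⟨0, Nat.lt_of_lt_of_le Nat.zero_lt_two hk⟩ := by
  classical
  obtain ⟨n, rfl⟩ : ∃ n, k = n + 2 := ⟨k - 2, (Nat.sub_add_cancel hk).symm⟩
  have hz : (⟨0, Nat.lt_of_lt_of_le Nat.zero_lt_two hk⟩ : Fin (n+2)) = 0 := by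
    ext; simp
  rw [hz]
  have hch : ∀ j : ℕ, ((m - j) + (n + 2 - 1) - 1).choose (m - j)
      = ((m - j) + n).choose (m - j) := by
    intro j; congr 1
  simp only [hch]
  set T := (Finset.Nat.antidiagonalTuple (n+2) m).filter (fun a => toLex a < toLex ℓ) with hT
  have hiT : i = T.card := by
    rw [hi, ← Set.ncard_coe_finset]
    congr 1
    ext a
    simp [hT, Finset.Nat.mem_antidiagonalTuple]
  clear hi hilt
  have hl0m : ℓ 0 ≤ m := by
    have : ℓ 0 ≤ ∑ j, ℓ j :=
      Finset.single_le_sum (fun i _ => Nat.zero_le (ℓ i)) (Finset.mem_univ 0)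
    omega
  set T1 := (Finset.Nat.antidiagonalTuple (n+2) m).filter (fun a => a 0 < ℓ 0) with hT1
  set T2 := (Finset.Nat.antidiagonalTuple (n+2) m).filter
    (fun a => toLex a < toLex ℓ ∧ a 0 = ℓ 0) with hT2
  have hunion : T = T1 ∪ T2 := by
    ext a
    simp only [hT, hT1, hT2, Finset.mem_union, Finset.mem_filter]
    constructor
    · rintro ⟨hm, hlt⟩
      obtain ⟨w, hw, hwlt⟩ := id hlt
      rcases eq_or_ne w 0 with rfl | hw0
      · exact Or.inl ⟨hm, hwlt⟩
      · exact Or.inr ⟨hm, hlt, hw 0 (Fin.pos_of_ne_zero hw0)⟩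
    · rintro (⟨hm, hlt⟩ | ⟨hm, h⟩)
      · exact ⟨hm, 0, fun j hj => absurd hj (Fin.not_lt_zero j), hlt⟩
      · exact ⟨hm, h.1⟩
  have hdisj : Disjoint T1 T2 := by
    rw [Finset.disjoint_left]
    intro a h1 h2
    rw [hT1, Finset.mem_filter] at h1
    rw [hT2, Finset.mem_filter] at h2
    omega
  have hcardsplit : T.card = T1.card + T2.card := by
    rw [hunion, Finset.card_union_of_disjoint hdisj]
  -- T1 count
  have hH1 : ∀ a ∈ T1, (fun a : Fin (n+2) → ℕ => a 0) a ∈ Finset.range (ℓ 0) := by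
    intro a ha
    show a 0 ∈ Finset.range (ℓ 0)
    rw [hT1, Finset.mem_filter] at ha
    exact Finset.mem_range.2 ha.2
  have h1card := Finset.card_eq_sum_card_fiberwise hH1
  beta_reduce at h1card
  have hfib1 : ∀ j ∈ Finset.range (ℓ 0),
      (T1.filter (fun a => a 0 = j)).card = ((m-j)+n).choose (m-j) := by
    intro j hj
    rw [Finset.mem_range] at hj
    rw [hT1, Finset.filter_filter]
    rw [show ((Finset.Nat.antidiagonalTuple (n+2) m).filter (fun a => a 0 < ℓ 0 ∧ a 0 = j))
        = ((Finset.Nat.antidiagonalTuple (n+2) m).filter (fun a => a 0 = j)) from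
      Finset.filter_congr (fun a _ => by constructor <;> intro h <;> [exact h.2; exact ⟨h ▸ hj, h⟩])]
    rw [slice_card (n+1) m j (le_of_lt (lt_of_lt_of_le hj hl0m)), antid_card n (m-j)]
  rw [Finset.sum_congr rfl hfib1] at h1card
  -- T2 bound
  have htailℓ : Fin.tail ℓ ∈ Finset.Nat.antidiagonalTuple (n+1) (m - ℓ 0) := by
    rw [Finset.Nat.mem_antidiagonalTuple]
    rw [Fin.sum_univ_succ] at hsum
    simp only [Fin.tail]
    omega
  have h2card : T2.card < ((m - ℓ 0) + n).choose (m - ℓ 0) := by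
    have hle : T2.card ≤ ((Finset.Nat.antidiagonalTuple (n+1) (m - ℓ 0)).erase (Fin.tail ℓ)).card := by
      apply Finset.card_le_card_of_injOn Fin.tail
      · intro a ha
        rw [hT2, Finset.mem_coe, Finset.mem_filter] at ha
        obtain ⟨hmem, hlt, h0⟩ := ha
        rw [Finset.Nat.mem_antidiagonalTuple] at hmem
        rw [Finset.mem_coe, Finset.mem_erase]
        constructor
        · intro heq
          have haℓ : a = ℓ := by
            funext x
            induction x using Fin.cases with
            | zero => exact h0
            | succ x => exact congrFun heq x
          rw [haℓ] at hlt
          exact lt_irrefl _ hlt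
        · rw [Finset.Nat.mem_antidiagonalTuple]
          rw [Fin.sum_univ_succ] at hmem
          simp only [Fin.tail]
          omega
      · intro a ha b hb heq
        simp only [hT2, Finset.coe_filter, Set.mem_setOf_eq] at ha hb
        funext x
        induction x using Fin.cases with
        | zero => rw [ha.2.2, hb.2.2]
        | succ x => exact congrFun heq x
    have hpos : 0 < (Finset.Nat.antidiagonalTuple (n+1) (m - ℓ 0)).card :=
      Finset.card_pos.2 ⟨_, htailℓ⟩
    rw [Finset.card_erase_of_mem htailℓ] at hle
    rw [antid_card n (m - ℓ 0)] at hle hpos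
    omega
  -- combine
  have hival : i = (∑ j ∈ Finset.range (ℓ 0), ((m-j)+n).choose (m-j)) + T2.card := by
    rw [hiT, hcardsplit, h1card]
  constructor
  · constructor
    · omega
    · rw [Finset.sum_range_succ]
      omega
  · intro l ⟨hl1, hl2⟩
    by_contra hne
    have mono : ∀ a b : ℕ, a ≤ b →
        ∑ j ∈ Finset.range a, ((m-j)+n).choose (m-j)
          ≤ ∑ j ∈ Finset.range b, ((m-j)+n).choose (m-j) :=
      fun a b h => Finset.sum_le_sum_of_subset (Finset.range_subset_range.2 h)
    have hub : i < ∑ j ∈ Finset.range (ℓ 0 + 1), ((m-j)+n).choose (m-j) := by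
      rw [Finset.sum_range_succ]; omega
    have hlb : ∑ j ∈ Finset.range (ℓ 0), ((m-j)+n).choose (m-j) ≤ i := by omega
    rcases lt_or_gt_of_ne hne with h | h
    · exact absurd (le_trans (mono (l+1) (ℓ 0) h) hlb) (by omega)
    · exact absurd (le_trans (mono (ℓ 0 + 1) l h) hl1) (by omega)
end
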